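/- Under the hypotheses of Lemma epsilonNeigh (stable path with backward limit X₋), for each r > 0 there is a unique bi-infinite solution {x_n^r}_{n ∈ ℤ} of x_{n+1} = f(x_n, Λ(rn)) satisfying lim_{n → −∞} x_n^r = X₋. -/
import Mathlib


open Filter

/-- Theorem uniqueSolution: under the hypotheses of Lemma epsilonNeigh
(stable path with backward limit `X₋`, the lemma's conclusion being taken as a
hypothesis), for each `r > 0` there is a unique bi-infinite solution of
`x_{n+1} = f(x_n, Λ(rn))` with `x_n → X₋` as `n → −∞`. -/
theorem stmt6 (ℓ m : ℕ)
    (f : (Fin ℓ → ℝ) × (Fin m → ℝ) → (Fin ℓ → ℝ)) (hf : ContDiff ℝ 1 f)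
    (Λ : ℝ → (Fin m → ℝ)) (hΛ : ContDiff ℝ 1 Λ) (lamm : Fin m → ℝ)
    (hΛlim : Tendsto Λ atBot (nhds lamm))
    (hΛ'lim : Tendsto (deriv Λ) atBot (nhds 0))
    (Xm : Fin ℓ → ℝ) (hfix : f (Xm, lamm) = Xm)
    (hspec : ∀ μ ∈ spectrum ℂ
        ((LinearMap.toMatrix' ((fderiv ℝ (fun x => f (x, lamm)) Xm :
            (Fin ℓ → ℝ) →L[ℝ] (Fin ℓ → ℝ)) : (Fin ℓ → ℝ) →ₗ[ℝ] (Fin ℓ → ℝ))).map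
          Complex.ofReal), ‖μ‖ < 1)
    -- conclusion of Lemma epsilonNeigh, assumed as a hypothesis:
    (hlem : ∃ ε₀ > (0:ℝ), ∀ ε : ℝ, 0 < ε → ε ≤ ε₀ →
      ∃ S > (0:ℝ), ∀ r : ℝ, 0 < r → ∀ N : ℕ, S < r * N →
        ∃! x : {n : ℤ // n ≤ -(N:ℤ)} → (Fin ℓ → ℝ),
          (∀ n : {n : ℤ // n ≤ -(N:ℤ)}, ‖x n - Xm‖ ≤ ε) ∧
          (∀ n : ℤ, ∀ h : n + 1 ≤ -(N:ℤ),
            x ⟨n + 1, h⟩ = f (x ⟨n, by omega⟩, Λ (r * n)))) :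
    ∀ r : ℝ, 0 < r →
      ∃! x : ℤ → (Fin ℓ → ℝ),
        (∀ n : ℤ, x (n + 1) = f (x n, Λ (r * n))) ∧
        Tendsto x atBot (nhds Xm) := by
  intro r hr
  obtain ⟨ε₀, hε₀, hlem⟩ := hlem
  obtain ⟨S, hSpos, hSuniq⟩ := hlem ε₀ hε₀ le_rfl
  obtain ⟨N, hN⟩ := exists_nat_gt (S / r)
  have hrN : S < r * N := by
    rw [div_lt_iff₀ hr] at hN; linarith [mul_comm (N : ℝ) r]
  obtain ⟨x₀, ⟨hx₀b, hx₀rec⟩, hx₀u⟩ := hSuniq r hr N hrN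
  -- forward iteration
  set g : ℕ → (Fin ℓ → ℝ) := fun k =>
    Nat.rec (x₀ ⟨-(N : ℤ), le_rfl⟩)
      (fun k xk => f (xk, Λ (r * ((k : ℝ) - (N : ℝ))))) k with hg
  have hg0 : g 0 = x₀ ⟨-(N : ℤ), le_rfl⟩ := rfl
  have hgs : ∀ k : ℕ, g (k + 1) = f (g k, Λ (r * ((k : ℝ) - (N : ℝ)))) :=
    fun k => rfl
  set x : ℤ → (Fin ℓ → ℝ) := fun n =>
    if h : n ≤ -(N : ℤ) then x₀ ⟨n, h⟩ else g (n + N).toNat with hx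
  have hxlow : ∀ n : ℤ, ∀ h : n ≤ -(N : ℤ), x n = x₀ ⟨n, h⟩ := by
    intro n h; simp only [hx, dif_pos h]
  have hxg : ∀ n : ℤ, -(N : ℤ) ≤ n → x n = g (n + N).toNat := by
    intro n hn
    rcases le_or_gt n (-(N : ℤ)) with h | h
    · have hn' : n = -(N : ℤ) := le_antisymm h hn
      subst hn'
      rw [hxlow _ le_rfl]
      have : (-(N : ℤ) + N).toNat = 0 := by omega
      rw [this, hg0]
    · simp only [hx, dif_neg (not_le.mpr h)]
  have hxrec : ∀ n : ℤ, x (n + 1) = f (x n, Λ (r * n)) := by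
    intro n
    rcases le_or_gt (n + 1) (-(N : ℤ)) with h | h
    · have hn : n ≤ -(N : ℤ)- 1 := by omega
      rw [hxlow _ h, hxlow n (by omega), hx₀rec n h]
    · have hn : -(N : ℤ) ≤ n := by omega
      rw [hxg _ (by omega), hxg _ hn]
      have ht : (n + 1 + N).toNat = (n + N).toNat + 1 := by omega
      rw [ht, hgs]
      congr 2
      have : (((n + N).toNat : ℤ) : ℝ) = (n : ℝ) + (N : ℝ) := by
        have : ((n + N).toNat : ℤ) = n + N := by omega
        rw [this]; push_cast; ring
      rw [Int.cast_natCast] at this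
      rw [this]; ring
  -- norm bound on the tail at level ε₀
  have hxb : ∀ n : ℤ, n ≤ -(N : ℤ) → ‖x n - Xm‖ ≤ ε₀ := by
    intro n h; rw [hxlow n h]; exact hx₀b ⟨n, h⟩
  -- forward extension uniqueness
  have ext : ∀ u v : ℤ → (Fin ℓ → ℝ),
      (∀ n : ℤ, u (n + 1) = f (u n, Λ (r * n))) →
      (∀ n : ℤ, v (n + 1) = f (v n, Λ (r * n))) →
      ∀ M : ℤ, (∀ n ≤ M, u n = v n) → ∀ n, u n = v n := by
    intro u v hu hv M hM n
    rcases le_or_gt n M with h | h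
    · exact hM n h
    · have key : ∀ k : ℕ, u (M + k) = v (M + k) := by
        intro k
        induction k with
        | zero => simpa using hM M le_rfl
        | succ k ih =>
            have hMk : M + ((k + 1 : ℕ) : ℤ) = (M + k) + 1 := by push_cast; ring
            rw [hMk, hu, hv, ih]
      have hn : n = M + ((n - M).toNat : ℤ) := by omega
      rw [hn]; exact key _
  -- tendsto
  have hxt : Tendsto x atBot (nhds Xm) := by
    rw [Metric.tendsto_nhds]
    intro ε hε
    rw [eventually_atBot]
    set ε' : ℝ := min ε₀ (ε / 2) with hε'
    have hε'pos : 0 < ε' := lt_min hε₀ (by linarith)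
    have hε'le : ε' ≤ ε₀ := min_le_left _ _
    obtain ⟨S', hS'pos, hS'uniq⟩ := hlem ε' hε'pos hε'le
    obtain ⟨N₁, hN₁⟩ := exists_nat_gt (S' / r)
    set N₂ : ℕ := max N N₁ with hN₂
    have hrN₂ : S < r * N₂ := lt_of_lt_of_le hrN
      (by apply mul_le_mul_of_nonneg_left _ hr.le; exact_mod_cast le_max_left N N₁)
    have hrN₂' : S' < r * N₂ := by
      rw [div_lt_iff₀ hr] at hN₁
      calc S' < N₁ * r := hN₁
        _ = r * N₁ := mul_comm _ _
        _ ≤ r * N₂ := by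
            apply mul_le_mul_of_nonneg_left _ hr.le
            exact_mod_cast le_max_right N N₁
    obtain ⟨y, ⟨hyb, hyrec⟩, hyu⟩ := hS'uniq r hr N₂ hrN₂'
    obtain ⟨w, hw, hwu⟩ := hSuniq r hr N₂ hrN₂
    have hle : -(N₂ : ℤ) ≤ -(N : ℤ) := by
      simp only [neg_le_neg_iff]; exact_mod_cast le_max_left N N₁
    have hXw : (fun n : {n : ℤ // n ≤ -(N₂ : ℤ)} => x n) = w := by
      apply hwu
      refine ⟨fun n => hxb n (le_trans n.2 hle), fun n h => ?_⟩
      simp only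
      rw [hxrec n]
    have hyw : y = w := by
      apply hwu
      exact ⟨fun n => le_trans (hyb n) hε'le, hyrec⟩
    refine ⟨-(N₂ : ℤ), fun n hn => ?_⟩
    have hxy : x n = y ⟨n, hn⟩ := by
      have := congrFun hXw ⟨n, hn⟩
      simp only at this
      rw [this, hyw]
    rw [dist_eq_norm, hxy]
    calc ‖y ⟨n, hn⟩ - Xm‖ ≤ ε' := hyb _
      _ ≤ ε / 2 := min_le_right _ _
      _ < ε := by linarith
  refine ⟨x, ⟨hxrec, hxt⟩, ?_⟩
  rintro z ⟨hzrec, hzt⟩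
  -- z eventually ε₀-close
  have := Metric.tendsto_nhds.mp hzt ε₀ hε₀
  rw [eventually_atBot] at this
  obtain ⟨M, hM⟩ := this
  set N₃ : ℕ := max N (Int.toNat (-M)) with hN₃
  have hrN₃ : S < r * N₃ := lt_of_lt_of_le hrN
    (by apply mul_le_mul_of_nonneg_left _ hr.le; exact_mod_cast le_max_left _ _)
  have hN₃M : -(N₃ : ℤ) ≤ M := by
    have h1 : (Int.toNat (-M) : ℤ) ≥ -M := Int.self_le_toNat _
    have h2 : (N₃ : ℤ) ≥ (Int.toNat (-M) : ℤ) := by exact_mod_cast le_max_right N (Int.toNat (-M))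
    omega
  have hN₃N : -(N₃ : ℤ) ≤ -(N : ℤ) := by
    simp only [neg_le_neg_iff]; exact_mod_cast le_max_left _ _
  obtain ⟨w, hw, hwu⟩ := hSuniq r hr N₃ hrN₃
  have hXw : (fun n : {n : ℤ // n ≤ -(N₃ : ℤ)} => x n) = w := by
    apply hwu
    refine ⟨fun n => hxb n (le_trans n.2 hN₃N), fun n h => ?_⟩
    simp only
    rw [hxrec n]
  have hZw : (fun n : {n : ℤ // n ≤ -(N₃ : ℤ)} => z n) = w := by
    apply hwu
    refine ⟨fun n => ?_, fun n h => ?_⟩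
    · have := hM n (le_trans n.2 hN₃M)
      rw [dist_eq_norm] at this
      exact this.le
    · simp only
      rw [hzrec n]
  have htail : ∀ n : ℤ, n ≤ -(N₃ : ℤ) → z n = x n := by
    intro n hn
    have h1 := congrFun hZw ⟨n, hn⟩
    have h2 := congrFun hXw ⟨n, hn⟩
    simp only at h1 h2
    rw [h1, h2]
  exact funext (ext z x hzrec hxrec (-(N₃ : ℤ)) htail)
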